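/- Let T be a finite tree (a connected acyclic simple graph), let I be a nonempty set of vertices of T each having degree exactly 3 in T, and let E* be a set of edges of T such that for every connected component C of the subgraph of T induced by I, at most one of the edges of T with exactly one endpoint in C does not belong to E*. Then |E*| ≥ |I| + 1. -/

import Mathlib

open scoped Classical

/-! Every component `C` of `T[I]` spans a subforest, so at most `|C| - 1` edges of `T` lie
inside `C`. Counting incidences, `3|C| = 2·#(edges inside C) + #(edges leaving C)`, so at least
`|C| + 2` edges leave `C`, and at least `|C| + 1` of them lie in `E*`. An edge joining two
components would merge them, so distinct components have disjoint sets of leaving edges, and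
summing over the (at least one) components gives `|E*| ≥ |I| + #components ≥ |I| + 1`. -/

open Finset

namespace Finset

variable {α : Type*} {r : α → α → Prop}

theorem filter_rel_congr (hr : Equivalence r) (I : Finset α) {u v : α} (h : r u v) :
    {x ∈ I | r u x} = {x ∈ I | r v x} :=
  filter_congr fun _ _ => ⟨hr.trans (hr.symm h), hr.trans h⟩

theorem filter_rel_eq_filter_rel_iff (hr : Equivalence r) {I : Finset α} {u v : α}
    (hu : u ∈ I) :
    {x ∈ I | r u x} = {x ∈ I | r v x} ↔ r v u := by
  refine ⟨fun h => ?_, fun h => filter_rel_congr hr I (hr.symm h)⟩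
  have hu' : u ∈ {x ∈ I | r v x} := h ▸ mem_filter.2 ⟨hu, hr.refl u⟩
  exact (mem_filter.1 hu').2

theorem sum_card_image_filter_rel [DecidableEq α] (hr : Equivalence r) (I : Finset α) :
    ∑ C ∈ I.image (fun v => {x ∈ I | r v x}), #C = #I := by
  rw [card_eq_sum_card_image (fun v => {x ∈ I | r v x}) I]
  refine sum_congr rfl fun C hC => ?_
  obtain ⟨v, -, rfl⟩ := mem_image.1 hC
  congr 1
  exact filter_congr fun x hx => (filter_rel_eq_filter_rel_iff hr hx).symm

theorem rel_iff_mem_filter_rel (hr : Equivalence r) {I : Finset α} {v x y : α}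
    (hx : x ∈ {z ∈ I | r v z}) (hy : y ∈ I) : r x y ↔ y ∈ {z ∈ I | r v z} := by
  rw [filter_rel_congr hr I (mem_filter.1 hx).2]
  simp [hy]

theorem not_rel_of_filter_rel_ne (hr : Equivalence r) {I : Finset α} {u v a b : α}
    (hne : {x ∈ I | r u x} ≠ {x ∈ I | r v x}) (ha : a ∈ {x ∈ I | r u x})
    (hb : b ∈ {x ∈ I | r v x}) : ¬r a b := fun hab =>
  hne <| filter_rel_congr hr I <|
    hr.trans (mem_filter.1 ha).2 (hr.trans hab (hr.symm (mem_filter.1 hb).2))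

theorem card_filter_mem_eq_of_not_isDiag [DecidableEq α] {C : Finset α} {e : Sym2 α}
    (he : ¬e.IsDiag) :
    #{v ∈ C | v ∈ e} = 2 * (if e ∈ C.sym2 then 1 else 0) +
      if ∃ a ∈ C, ∃ b ∉ C, e = s(a, b) then 1 else 0 := by
  induction e with | h a b => ?_
  have hab : a ≠ b := fun h => he (Sym2.mk_isDiag_iff.2 h)
  have hfilter : {v ∈ C | v ∈ s(a, b)} = C ∩ {a, b} := by ext; simp [and_comm]
  have hcut : (∃ x ∈ C, ∃ y ∉ C, s(a, b) = s(x, y)) ↔ a ∈ C ∧ b ∉ C ∨ b ∈ C ∧ a ∉ C := by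
    simp only [Sym2.eq_iff]
    grind
  simp only [hfilter, hcut]
  by_cases ha : a ∈ C <;> by_cases hb : b ∈ C <;> simp [ha, hb, hab]

end Finset

namespace SimpleGraph

variable {V : Type*} {G : SimpleGraph V}

theorem IsAcyclic.card_edgeFinset_lt_card [Fintype V] [Nonempty V] [Fintype G.edgeSet]
    (hG : G.IsAcyclic) : #G.edgeFinset < Fintype.card V := by
  obtain ⟨F, hGF, -, hF⟩ := connected_top.exists_isTree_le_of_le_of_isAcyclic le_top hG
  have : Fintype F.edgeSet := Fintype.ofFinite _
  rw [← hF.card_edgeFinset, Nat.lt_succ_iff]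
  exact card_le_card (edgeFinset_mono hGF)

variable [Fintype V] [DecidableEq V] [DecidableRel G.Adj]

theorem IsAcyclic.card_edgeFinset_inter_sym2_lt (hG : G.IsAcyclic) {C : Finset V}
    (hC : C.Nonempty) : #(G.edgeFinset ∩ C.sym2) < #C := by
  have : Nonempty (C : Set V) := hC.to_subtype
  have hinduce : (G.induce (C : Set V)).IsAcyclic := hG.embedding (Embedding.induce _)
  have hmap := map_edgeFinset_induce (G := G) (s := (C : Set V))
  rw [toFinset_coe] at hmap
  rw [← hmap, card_map]
  convert hinduce.card_edgeFinset_lt_card using 3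
  simp

variable (G) in
def edgeBoundary (C : Finset V) : Finset (Sym2 V) :=
  {e ∈ G.edgeFinset | ∃ a ∈ C, ∃ b ∉ C, e = s(a, b)}

theorem sum_degree_eq_two_mul_card_inter_sym2_add_card_edgeBoundary (C : Finset V) :
    ∑ v ∈ C, G.degree v = 2 * #(G.edgeFinset ∩ C.sym2) + #(G.edgeBoundary C) := by
  calc ∑ v ∈ C, G.degree v = ∑ e ∈ G.edgeFinset, #{v ∈ C | v ∈ e} := by
        simp_rw [← card_incidenceFinset_eq_degree, incidenceFinset_eq_filter, card_filter]
        exact sum_comm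
    _ = _ := by
        rw [sum_congr rfl fun e he => card_filter_mem_eq_of_not_isDiag
          (G.not_isDiag_of_mem_edgeSet (mem_edgeFinset.1 he)), sum_add_distrib, ← mul_sum,
          ← card_filter, filter_mem_eq_inter, edgeBoundary, card_filter]
        -- the two sides differ only in their `Decidable` instances
        congr!

theorem IsAcyclic.sum_degree_add_two_le (hG : G.IsAcyclic) {C : Finset V} (hC : C.Nonempty) :
    ∑ v ∈ C, G.degree v + 2 ≤ 2 * #C + #(G.edgeBoundary C) := by
  have := hG.card_edgeFinset_inter_sym2_lt hC
  rw [sum_degree_eq_two_mul_card_inter_sym2_add_card_edgeBoundary]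
  omega

theorem IsAcyclic.card_add_one_le_card_edgeBoundary_inter (hG : G.IsAcyclic) {C : Finset V}
    (hC : C.Nonempty) (hdeg : ∀ v ∈ C, G.degree v = 3) {E : Finset (Sym2 V)}
    (hE : #{e ∈ G.edgeBoundary C | e ∉ E} ≤ 1) : #C + 1 ≤ #(G.edgeBoundary C ∩ E) := by
  have hsum := hG.sum_degree_add_two_le hC
  rw [sum_congr rfl hdeg, sum_const, smul_eq_mul] at hsum
  have hsplit := card_inter_add_card_sdiff (G.edgeBoundary C) E
  rw [sdiff_eq_filter] at hsplit
  omega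

theorem disjoint_edgeBoundary {C D : Finset V} (hCD : Disjoint C D)
    (hadj : ∀ a ∈ C, ∀ b ∈ D, ¬G.Adj a b) :
    Disjoint (G.edgeBoundary C) (G.edgeBoundary D) := by
  refine Finset.disjoint_left.2 fun e he he' => ?_
  obtain ⟨heG, a, ha, b, -, rfl⟩ := mem_filter.1 he
  obtain ⟨-, a', ha', b', -, he'⟩ := mem_filter.1 he'
  rcases Sym2.eq_iff.1 he' with ⟨rfl, -⟩ | ⟨rfl, rfl⟩
  · exact Finset.disjoint_left.1 hCD ha ha'
  · exact hadj a ha b ha' (mem_edgeFinset.1 heG)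

end SimpleGraph

theorem edges_cut_lower_bound_general
    {V : Type*} [Fintype V] [DecidableEq V]
    (T : SimpleGraph V) [DecidableRel T.Adj]
    (hacyc : T.IsAcyclic)
    (I : Finset V) (hI : I.Nonempty)
    (hdeg : ∀ v ∈ I, T.degree v = 3)
    (Estar : Finset (Sym2 V))
    (hcomp : ∀ C : Finset V, C.Nonempty → C ⊆ I →
      (∀ x ∈ C, ∀ y ∈ I,
        (Relation.ReflTransGen (fun a b => a ∈ I ∧ b ∈ I ∧ T.Adj a b) x y ↔ y ∈ C)) →
      (T.edgeFinset.filter fun e =>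
        (∃ a ∈ C, ∃ b ∉ C, e = s(a, b)) ∧ e ∉ Estar).card ≤ 1) :
    I.card + 1 ≤ Estar.card := by
  set R : V → V → Prop := fun a b => a ∈ I ∧ b ∈ I ∧ T.Adj a b
  have : Std.Symm R := ⟨fun _ _ h => ⟨h.2.1, h.1, h.2.2.symm⟩⟩
  have hr : Equivalence (Relation.ReflTransGen R) :=
    ⟨fun _ => .refl, fun h => Std.Symm.symm _ _ h, .trans⟩
  set comp : V → Finset V := fun v => {x ∈ I | Relation.ReflTransGen R v x}
  have hbound (v : V) (hv : v ∈ I) : #(comp v) + 1 ≤ #(T.edgeBoundary (comp v) ∩ Estar) := by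
    have hv' : v ∈ comp v := mem_filter.2 ⟨hv, .refl⟩
    refine hacyc.card_add_one_le_card_edgeBoundary_inter ⟨v, hv'⟩
      (fun u hu => hdeg u (mem_filter.1 hu).1) ?_
    simpa only [SimpleGraph.edgeBoundary, filter_filter] using hcomp (comp v) ⟨v, hv'⟩ (filter_subset _ _)
      fun x hx y hy => rel_iff_mem_filter_rel hr hx hy
  have hdisj : (↑(I.image comp) : Set (Finset V)).PairwiseDisjoint
      fun C => T.edgeBoundary C ∩ Estar := by
    rw [coe_image]
    rintro _ ⟨u, -, rfl⟩ _ ⟨v, -, rfl⟩ hne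
    refine (SimpleGraph.disjoint_edgeBoundary ?_ ?_).mono inter_subset_left inter_subset_left
    · exact disjoint_left.2 fun a ha ha' => not_rel_of_filter_rel_ne hr hne ha ha' .refl
    · exact fun a ha b hb hab => not_rel_of_filter_rel_ne hr hne ha hb
        (.single ⟨(mem_filter.1 ha).1, (mem_filter.1 hb).1, hab⟩)
  calc #I + 1 ≤ #I + #(I.image comp) := Nat.add_le_add_left (hI.image comp).card_pos _
    _ = ∑ C ∈ I.image comp, (#C + 1) := by
        rw [sum_add_distrib, sum_card_image_filter_rel hr, card_eq_sum_ones (I.image comp)]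
    _ ≤ ∑ C ∈ I.image comp, #(T.edgeBoundary C ∩ Estar) := sum_le_sum <| by
        simpa only [forall_mem_image] using hbound
    _ = #((I.image comp).biUnion fun C => T.edgeBoundary C ∩ Estar) := (card_biUnion hdisj).symm
    _ ≤ #Estar := card_le_card <| biUnion_subset.2 fun _ _ => inter_subset_right

/-- Let `T` be a finite tree (a connected acyclic simple graph), let
`I` be a nonempty set of vertices of `T` of degree exactly 3, and let `E*` be a set of
edges of `T` such that for every connected component `C` of the subgraph of `T` induced
by `I`, at most one of the edges of `T` with exactly one endpoint in `C` does not belong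
to `E*`. Then `|E*| ≥ |I| + 1`. -/
theorem edges_cut_lower_bound
    {V : Type*} [Fintype V] [DecidableEq V]
    (T : SimpleGraph V) [DecidableRel T.Adj]
    (hconn : T.Connected) (hacyc : T.IsAcyclic)
    (I : Finset V) (hI : I.Nonempty)
    (hdeg : ∀ v ∈ I, T.degree v = 3)
    (Estar : Finset (Sym2 V)) (hEsub : Estar ⊆ T.edgeFinset)
    (hcomp : ∀ C : Finset V, C.Nonempty → C ⊆ I →
      (∀ x ∈ C, ∀ y ∈ I,
        (Relation.ReflTransGen (fun a b => a ∈ I ∧ b ∈ I ∧ T.Adj a b) x y ↔ y ∈ C)) →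
      (T.edgeFinset.filter fun e =>
        (∃ a ∈ C, ∃ b ∉ C, e = s(a, b)) ∧ e ∉ Estar).card ≤ 1) :
    I.card + 1 ≤ Estar.card :=
  edges_cut_lower_bound_general T hacyc I hI hdeg Estar hcomp
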